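/- arXiv:0803.4494 — 2 statements merged into one kernel-verified Lean document; each statement's English description precedes it below -/
import Mathlib

section
/- Let n ≥ 1, let g ∈ Matrix (Fin n) (Fin n) ℝ be a positive definite symmetric matrix, let u ∈ ℝⁿ and c ∈ ℝ, and let G̃ be the Walker-type matrix built from (g, u, c). Then there exists an invertible matrix P ∈ Matrix (Fin (n+2)) (Fin (n+2)) ℝ such that Pᵀ·G̃·P is the diagonal matrix diag(−1, 1, 1, …, 1); i.e., the symmetric bilinear form defined by G̃ has Lorentzian signature (1, n+1). -/
open Matrix

/-- The Walker-type symmetric `(n+2) × (n+2)` matrix with block form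
`[[0, 0ᵀ, 1], [0, g, u], [1, uᵀ, c]]`, the coordinate matrix of the Lorentzian metric
`2dxdz + uᵢdyⁱdz + c·dz² + gᵢⱼdyⁱdyʲ`. -/
def walker (n : ℕ) (g : Matrix (Fin n) (Fin n) ℝ) (u : Fin n → ℝ) (c : ℝ) :
    Matrix (Fin (n + 2)) (Fin (n + 2)) ℝ :=
  fun i j =>
    if hi : 1 ≤ i.val ∧ i.val ≤ n then
      if hj : 1 ≤ j.val ∧ j.val ≤ n then g ⟨i.val - 1, by omega⟩ ⟨j.val - 1, by omega⟩
      else if j.val = n + 1 then u ⟨i.val - 1, by omega⟩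
      else 0
    else if i.val = 0 then
      if j.val = n + 1 then 1 else 0
    else
      if j.val = 0 then 1
      else if hj : 1 ≤ j.val ∧ j.val ≤ n then u ⟨j.val - 1, by omega⟩
      else c

/-!
Split the coordinates as `(x, z) ⊕ y`. Since `g` is invertible, eliminating the `y`-block
(a Schur complement) splits off `g` and leaves the hyperbolic plane `2xz + t z²`, where
`t = c - uᵀ g⁻¹ u`. The plane is congruent to `diag(-1, 1)` for every `t`, and `g` is congruent
to `1` through its positive square root.
-/

namespace Matrix

variable {m n R : Type*} [Fintype m] [DecidableEq m] [Fintype n] [DecidableEq n] [CommRing R]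

def Congruent (A B : Matrix m m R) : Prop :=
  ∃ P : Matrix m m R, IsUnit P ∧ Pᵀ * A * P = B

namespace Congruent

variable {A B C : Matrix m m R}

theorem symm (h : Congruent A B) : Congruent B A := by
  obtain ⟨P, hP, rfl⟩ := h
  have hdet : IsUnit P.det := (isUnit_iff_isUnit_det P).mp hP
  refine ⟨P⁻¹, isUnit_nonsing_inv_iff.mpr hP, ?_⟩
  rw [transpose_nonsing_inv, Matrix.mul_assoc, Matrix.mul_assoc, mul_nonsing_inv P hdet,
    Matrix.mul_one, ← Matrix.mul_assoc, nonsing_inv_mul _ (isUnit_det_transpose P hdet),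
    Matrix.one_mul]

theorem trans (hAB : Congruent A B) (hBC : Congruent B C) : Congruent A C := by
  obtain ⟨P, hP, rfl⟩ := hAB
  obtain ⟨Q, hQ, rfl⟩ := hBC
  exact ⟨P * Q, hP.mul hQ, by simp only [transpose_mul, Matrix.mul_assoc]⟩

theorem submatrix (h : Congruent A B) (e : n ≃ m) :
    Congruent (A.submatrix e e) (B.submatrix e e) := by
  obtain ⟨P, hP, rfl⟩ := h
  refine ⟨P.submatrix e e, ?_, ?_⟩
  · rw [isUnit_iff_isUnit_det, det_submatrix_equiv_self]
    exact (isUnit_iff_isUnit_det P).mp hP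
  · rw [transpose_submatrix, submatrix_mul_equiv, submatrix_mul_equiv]

theorem fromBlocks_zero {A' : Matrix m m R} {D D' : Matrix n n R}
    (hA : Congruent A A') (hD : Congruent D D') :
    Congruent (fromBlocks A 0 0 D) (fromBlocks A' 0 0 D') := by
  obtain ⟨P, hP, rfl⟩ := hA
  obtain ⟨Q, hQ, rfl⟩ := hD
  refine ⟨fromBlocks P 0 0 Q, ?_, ?_⟩
  · rw [isUnit_iff_isUnit_det, det_fromBlocks_zero₂₁]
    exact ((isUnit_iff_isUnit_det P).mp hP).mul ((isUnit_iff_isUnit_det Q).mp hQ)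
  · simp [fromBlocks_transpose, fromBlocks_multiply]

end Congruent

theorem congruent_fromBlocks_schurComplement (A : Matrix m m R) (B : Matrix m n R)
    {D : Matrix n n R} (hD : IsUnit D) (hDt : Dᵀ = D) :
    Congruent (fromBlocks A B Bᵀ D) (fromBlocks (A - B * D⁻¹ * Bᵀ) 0 0 D) := by
  have : Invertible D := invertibleOfIsUnitDet D ((isUnit_iff_isUnit_det D).mp hD)
  refine Congruent.symm ⟨fromBlocks 1 0 (D⁻¹ * Bᵀ) 1, ?_, ?_⟩
  · simp [isUnit_iff_isUnit_det]
  · rw [fromBlocks_eq_of_invertible₂₂ A B Bᵀ D, fromBlocks_transpose, invOf_eq_nonsing_inv]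
    simp [transpose_mul, transpose_nonsing_inv, hDt]

theorem congruent_diagonal_of_fin_two {K : Type*} [Field K] [NeZero (2 : K)]
    (H : Matrix (Fin 2) (Fin 2) K) (h00 : H 0 0 = 0) (h01 : H 0 1 = 1) (h10 : H 1 0 = 1) :
    Congruent H (diagonal ![-1, 1]) := by
  -- with `t = H 1 1`, the columns solve `2xz + t z² = ∓1` at `z = 1` and are orthogonal for it
  refine ⟨!![-(1 + H 1 1) / 2, (1 - H 1 1) / 2; 1, 1], ?_, ?_⟩
  · rw [isUnit_iff_isUnit_det, det_fin_two_of]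
    have h2 : (2 : K) ≠ 0 := two_ne_zero
    rw [show -(1 + H 1 1) / 2 * 1 - (1 - H 1 1) / 2 * 1 = -1 by field_simp; ring]
    exact isUnit_one.neg
  · rw [eta_fin_two H, h00, h01, h10]
    ext i j
    fin_cases i <;> fin_cases j <;> simp [mul_apply, Fin.sum_univ_two] <;> field_simp <;> ring

theorem PosDef.congruent_one {g : Matrix n n ℝ} (hg : g.PosDef) : Congruent g 1 := by
  open scoped MatrixOrder in
  set R := CFC.sqrt g
  have hR : IsUnit R := (CFC.isUnit_sqrt_iff g hg.posSemidef.nonneg).mpr hg.isUnit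
  have hRt : Rᵀ = R := by
    simpa [IsHermitian] using (CFC.sqrt_nonneg g).posSemidef.isHermitian
  refine Congruent.symm ⟨R, hR, ?_⟩
  rw [hRt, Matrix.mul_one, CFC.sqrt_mul_sqrt_self g hg.posSemidef.nonneg]

end Matrix

noncomputable def finEndsSumEquiv (n : ℕ) : Fin 2 ⊕ Fin n ≃ Fin (n + 2) :=
  Equiv.ofBijective (Sum.elim ![0, Fin.last (n + 1)] fun i => i.succ.castSucc) <| by
    rw [Fintype.bijective_iff_injective_and_card]
    refine ⟨?_, by simp [add_comm]⟩
    simp only [Function.Injective, Sum.forall, Fin.forall_fin_two]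
    simp [Fin.ext_iff]
    exact ⟨fun i => i.isLt.ne', fun i => i.isLt.ne⟩

@[simp] lemma finEndsSumEquiv_inl_zero (n : ℕ) : finEndsSumEquiv n (.inl 0) = 0 := rfl

@[simp] lemma finEndsSumEquiv_inl_one (n : ℕ) :
    finEndsSumEquiv n (.inl 1) = Fin.last (n + 1) := rfl

@[simp] lemma finEndsSumEquiv_inr (n : ℕ) (i : Fin n) :
    finEndsSumEquiv n (.inr i) = i.succ.castSucc := rfl

lemma walker_submatrix_finEndsSumEquiv (n : ℕ) (g : Matrix (Fin n) (Fin n) ℝ) (u : Fin n → ℝ)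
    (c : ℝ) :
    (walker n g u c).submatrix (finEndsSumEquiv n) (finEndsSumEquiv n) =
      fromBlocks !![0, 1; 1, c] (of ![0, u]) (of ![0, u])ᵀ g := by
  ext (i | i) (j | j)
  · fin_cases i <;> fin_cases j <;> simp [walker]
  · fin_cases i <;> simp [walker, j.isLt.ne]
  · fin_cases j <;> simp [walker]
  · simp [walker]

lemma diagonal_submatrix_finEndsSumEquiv (n : ℕ) :
    (diagonal fun i : Fin (n + 2) => if i.val = 0 then (-1 : ℝ) else 1).submatrix
        (finEndsSumEquiv n) (finEndsSumEquiv n) =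
      fromBlocks (diagonal ![-1, 1]) 0 0 1 := by
  rw [submatrix_diagonal_equiv, ← diagonal_one, fromBlocks_diagonal]
  congr 1
  ext (i | i)
  · fin_cases i <;> simp
  · simp

theorem walker_lorentzian_signature_general (n : ℕ)
    (g : Matrix (Fin n) (Fin n) ℝ) (hg : g.PosDef)
    (u : Fin n → ℝ) (c : ℝ) :
    ∃ P : Matrix (Fin (n + 2)) (Fin (n + 2)) ℝ, IsUnit P ∧
      Pᵀ * walker n g u c * P =
        Matrix.diagonal (fun i => if i.val = 0 then (-1 : ℝ) else 1) := by
  have hgt : gᵀ = g := by simpa [IsHermitian] using hg.isHermitian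
  have hplane := congruent_diagonal_of_fin_two
    (!![0, 1; 1, c] - of ![0, u] * g⁻¹ * (of ![0, u])ᵀ) (by simp) (by simp)
    (by simp [vecMul, dotProduct, mul_apply])
  have hblocks := (congruent_fromBlocks_schurComplement _ _ hg.isUnit hgt).trans
    (hplane.fromBlocks_zero hg.congruent_one)
  have := hblocks.submatrix (finEndsSumEquiv n).symm
  rwa [← walker_submatrix_finEndsSumEquiv, ← diagonal_submatrix_finEndsSumEquiv,
    submatrix_submatrix, submatrix_submatrix, Equiv.self_comp_symm, submatrix_id_id] at this

/-- The symmetric bilinear form defined by the Walker-type matrix has Lorentzian signature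
`(1, n+1)`: it is congruent to `diag(−1, 1, …, 1)`. -/
theorem walker_lorentzian_signature (n : ℕ) (hn : 1 ≤ n)
    (g : Matrix (Fin n) (Fin n) ℝ) (hg : g.PosDef) (hgs : g.IsSymm)
    (u : Fin n → ℝ) (c : ℝ) :
    ∃ P : Matrix (Fin (n + 2)) (Fin (n + 2)) ℝ, IsUnit P ∧
      Pᵀ * walker n g u c * P =
        Matrix.diagonal (fun i => if i.val = 0 then (-1 : ℝ) else 1) :=
  walker_lorentzian_signature_general n g hg u c
end

section
/- Let n ≥ 1, let g ∈ Matrix (Fin n) (Fin n) ℝ be a positive definite symmetric matrix, let u ∈ ℝⁿ and c ∈ ℝ, and let G̃ be the Walker-type matrix built from (g, u, c). Then G̃ is invertible and its inverse is the matrix with block form [[uᵀg⁻¹u − c, −(g⁻¹u)ᵀ, 1], [−g⁻¹u, g⁻¹, 0], [1, 0ᵀ, 0]], i.e., (G̃⁻¹)_{00} = uᵀg⁻¹u − c, (G̃⁻¹)_{0j} = (G̃⁻¹)_{j0} = −(g⁻¹u)_j for 1 ≤ j ≤ n, (G̃⁻¹)_{0,n+1} = (G̃⁻¹)_{n+1,0}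 = 1, (G̃⁻¹)_{ij} = (g⁻¹)_{ij} for 1 ≤ i,j ≤ n, and all other entries 0. -/
open Matrix

/-- The inverse of the Walker-type matrix: the block matrix
`[[uᵀg⁻¹u − c, −(g⁻¹u)ᵀ, 1], [−g⁻¹u, g⁻¹, 0], [1, 0ᵀ, 0]]`. -/
noncomputable def walkerInv (n : ℕ) (g : Matrix (Fin n) (Fin n) ℝ) (u : Fin n → ℝ) (c : ℝ) :
    Matrix (Fin (n + 2)) (Fin (n + 2)) ℝ :=
  fun i j =>
    if hi : 1 ≤ i.val ∧ i.val ≤ n then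
      if hj : 1 ≤ j.val ∧ j.val ≤ n then g⁻¹ ⟨i.val - 1, by omega⟩ ⟨j.val - 1, by omega⟩
      else if j.val = 0 then -(g⁻¹.mulVec u ⟨i.val - 1, by omega⟩)
      else 0
    else if i.val = 0 then
      if j.val = 0 then u ⬝ᵥ g⁻¹.mulVec u - c
      else if hj : 1 ≤ j.val ∧ j.val ≤ n then -(g⁻¹.mulVec u ⟨j.val - 1, by omega⟩)
      else 1
    else
      if j.val = 0 then 1 else 0

/-!
Multiply out `G̃ · G̃⁻¹` blockwise. Besides trivial entries, the identity reduces to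
`g g⁻¹ = 1`, `g (g⁻¹ u) = u`, `uᵀ g⁻¹ = (g⁻¹ u)ᵀ` (this is where the symmetry of `g` enters)
and the cancellation `(uᵀ g⁻¹ u − c) − uᵀ g⁻¹ u + c = 0` in the bottom-left corner.
A one-sided inverse of a square matrix is two-sided, which gives invertibility.
-/

theorem Fin.sum_univ_add_two {M : Type*} [AddCommMonoid M] {n : ℕ} (f : Fin (n + 2) → M) :
    ∑ k, f k = f 0 + ∑ k : Fin n, f k.castSucc.succ + f (Fin.last (n + 1)) := by
  rw [Fin.sum_univ_succ, Fin.sum_univ_castSucc]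
  simp only [Fin.succ_last, add_assoc]

theorem Fin.cases_add_two {n : ℕ} {motive : Fin (n + 2) → Prop} (zero : motive 0)
    (inner : ∀ a : Fin n, motive a.castSucc.succ) (last : motive (Fin.last (n + 1))) :
    ∀ i, motive i := by
  refine Fin.cases zero (Fin.lastCases ?_ inner)
  simpa using last

section Entries

variable {n : ℕ} (g : Matrix (Fin n) (Fin n) ℝ) (u : Fin n → ℝ) (c : ℝ) (a b : Fin n)

@[simp] lemma walker_zero_zero : walker n g u c 0 0 = 0 := by simp [walker]
@[simp] lemma walker_zero_inner : walker n g u c 0 b.castSucc.succ = 0 := by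
  simp [walker, b.isLt.ne]
@[simp] lemma walker_zero_last : walker n g u c 0 (Fin.last _) = 1 := by simp [walker]
@[simp] lemma walker_inner_zero : walker n g u c a.castSucc.succ 0 = 0 := by simp [walker]
@[simp] lemma walker_inner_inner : walker n g u c a.castSucc.succ b.castSucc.succ = g a b := by
  simp [walker]
@[simp] lemma walker_inner_last : walker n g u c a.castSucc.succ (Fin.last _) = u a := by
  simp [walker]
@[simp] lemma walker_last_zero : walker n g u c (Fin.last _) 0 = 1 := by simp [walker]
@[simp] lemma walker_last_inner : walker n g u c (Fin.last _) b.castSucc.succ = u b := by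
  simp [walker]
@[simp] lemma walker_last_last : walker n g u c (Fin.last _) (Fin.last _) = c := by simp [walker]

@[simp] lemma walkerInv_zero_zero : walkerInv n g u c 0 0 = u ⬝ᵥ g⁻¹ *ᵥ u - c := by
  simp [walkerInv]
@[simp] lemma walkerInv_zero_inner : walkerInv n g u c 0 b.castSucc.succ = -(g⁻¹ *ᵥ u) b := by
  simp [walkerInv]
@[simp] lemma walkerInv_zero_last : walkerInv n g u c 0 (Fin.last _) = 1 := by simp [walkerInv]
@[simp] lemma walkerInv_inner_zero : walkerInv n g u c a.castSucc.succ 0 = -(g⁻¹ *ᵥ u) a := by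
  simp [walkerInv]
@[simp] lemma walkerInv_inner_inner :
    walkerInv n g u c a.castSucc.succ b.castSucc.succ = g⁻¹ a b := by
  simp [walkerInv]
@[simp] lemma walkerInv_inner_last : walkerInv n g u c a.castSucc.succ (Fin.last _) = 0 := by
  simp [walkerInv]
@[simp] lemma walkerInv_last_zero : walkerInv n g u c (Fin.last _) 0 = 1 := by simp [walkerInv]
@[simp] lemma walkerInv_last_inner : walkerInv n g u c (Fin.last _) b.castSucc.succ = 0 := by
  simp [walkerInv]
@[simp] lemma walkerInv_last_last : walkerInv n g u c (Fin.last _) (Fin.last _) = 0 := by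
  simp [walkerInv]

end Entries

theorem walker_mul_walkerInv {n : ℕ} {g : Matrix (Fin n) (Fin n) ℝ} (hg : IsUnit g.det)
    (hgs : g.IsSymm) (u : Fin n → ℝ) (c : ℝ) : walker n g u c * walkerInv n g u c = 1 := by
  have hgg : g * g⁻¹ = 1 := mul_nonsing_inv g hg
  have hgu : g *ᵥ (g⁻¹ *ᵥ u) = u := by rw [mulVec_mulVec, hgg, one_mulVec]
  have hug : u ᵥ* g⁻¹ = g⁻¹ *ᵥ u := by
    rw [← mulVec_transpose, transpose_nonsing_inv, hgs]
  have h0 (b : Fin n) : b.castSucc.succ ≠ 0 := Fin.succ_ne_zero _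
  have hlast (b : Fin n) : b.castSucc.succ ≠ Fin.last (n + 1) := by simp [← Fin.succ_last]
  ext i j
  induction i using Fin.cases_add_two <;> induction j using Fin.cases_add_two <;>
    simp [mul_apply, Fin.sum_univ_add_two, one_apply, h0, hlast, (h0 _).symm, (hlast _).symm]
  case last.zero => rw [dotProduct]; ring
  case last.inner b => rw [← vecMul_apply_eq_sum, hug, neg_add_cancel]
  case inner.zero a => rw [← mulVec_apply_eq_sum, hgu, neg_add_cancel]
  case inner.inner a b => rw [← mul_apply, hgg, one_apply]

theorem walker_inv_general (n : ℕ)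
    (g : Matrix (Fin n) (Fin n) ℝ) (hg : g.PosDef) (hgs : g.IsSymm)
    (u : Fin n → ℝ) (c : ℝ) :
    IsUnit (walker n g u c) ∧ (walker n g u c)⁻¹ = walkerInv n g u c := by
  have h := walker_mul_walkerInv ((isUnit_iff_isUnit_det g).mp hg.isUnit) hgs u c
  exact ⟨.of_mul_eq_one _ h, inv_eq_right_inv h⟩

/-- The Walker-type matrix built from a positive definite symmetric matrix `g`, a vector
`u` and a scalar `c` is invertible, with inverse the block matrix
`[[uᵀg⁻¹u − c, −(g⁻¹u)ᵀ, 1], [−g⁻¹u, g⁻¹, 0], [1, 0ᵀ, 0]]`. -/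
theorem walker_inv (n : ℕ) (hn : 1 ≤ n)
    (g : Matrix (Fin n) (Fin n) ℝ) (hg : g.PosDef) (hgs : g.IsSymm)
    (u : Fin n → ℝ) (c : ℝ) :
    IsUnit (walker n g u c) ∧ (walker n g u c)⁻¹ = walkerInv n g u c :=
  walker_inv_general n g hg hgs u c
end
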